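/- Let f : ℝ³ × ℝ² → ℝ³ be the unicycle dynamics f((x₁,x₂,x₃),(u₁,u₂)) = (u₁ cos(x₃), u₁ sin(x₃), u₂). Let ε ≠ 0 and let B ⊂ ℝ³ be a ball centered at 0 ∈ ℝ³ of radius strictly less than π/2. Then the point (0, ε, 0) ∈ ℝ³ does not belong to the image f(B × ℝ²). In particular, f(𝒩) is not a neighborhood of 0 ∈ ℝ³ for 𝒩 = B × ℝ², so the unicycle does not satisfy the Brockett necessary condition for stabilizability by continuous state feedback. -/

import Mathlib

/-! For a heading `|θ| < π/2` we have `cos θ > 0`, so a velocity with vanishing first component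
has zero speed `u₁` and hence also vanishing second component: no point `(0, δ, 0)` with `δ ≠ 0`
is reached from states in the ball. These points accumulate at `0`, so the image is not a
neighbourhood of `0`. -/

open Set Filter

/-- The unicycle dynamics `f((x₁,x₂,x₃),(u₁,u₂)) = (u₁cos x₃, u₁sin x₃, u₂)`. -/
noncomputable def fUni (p : EuclideanSpace ℝ (Fin 3) × (ℝ × ℝ)) :
    EuclideanSpace ℝ (Fin 3) :=
  WithLp.toLp 2 ![p.2.1 * Real.cos (p.1 2), p.2.1 * Real.sin (p.1 2), p.2.2]

open Topology Real

lemma fUni_apply_zero (p : EuclideanSpace ℝ (Fin 3) × (ℝ × ℝ)) :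
    fUni p 0 = p.2.1 * cos (p.1 2) := rfl

lemma fUni_apply_one (p : EuclideanSpace ℝ (Fin 3) × (ℝ × ℝ)) :
    fUni p 1 = p.2.1 * sin (p.1 2) := rfl

lemma fUni_apply_one_eq_zero {p : EuclideanSpace ℝ (Fin 3) × (ℝ × ℝ)}
    (hθ : |p.1 2| < π / 2) (h0 : fUni p 0 = 0) : fUni p 1 = 0 := by
  have hcos : cos (p.1 2) ≠ 0 := (cos_pos_of_mem_Ioo (abs_lt.mp hθ)).ne'
  have hspeed : p.2.1 = 0 := by
    simpa [fUni_apply_zero, hcos] using h0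
  rw [fUni_apply_one, hspeed, zero_mul]

lemma toLp_sideways_notMem_image_fUni {ε ρ : ℝ} (hε : ε ≠ 0) (hρ : ρ ≤ π / 2) :
    (WithLp.toLp 2 ![0, ε, 0] : EuclideanSpace ℝ (Fin 3)) ∉
      fUni '' (Metric.ball (0 : EuclideanSpace ℝ (Fin 3)) ρ ×ˢ (univ : Set (ℝ × ℝ))) := by
  rintro ⟨p, ⟨hx, -⟩, hp⟩
  have hθ : |p.1 2| < π / 2 := calc
    |p.1 2| = ‖p.1 2‖ := (Real.norm_eq_abs _).symm
    _ ≤ ‖p.1‖ := PiLp.norm_apply_le p.1 2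
    _ < ρ := mem_ball_zero_iff.mp hx
    _ ≤ π / 2 := hρ
  have h1 := fUni_apply_one_eq_zero hθ (by simp [hp])
  exact hε (by simpa [hp] using h1)

lemma tendsto_toLp_sideways :
    Tendsto (fun ε : ℝ => (WithLp.toLp 2 ![0, ε, 0] : EuclideanSpace ℝ (Fin 3))) (𝓝 0) (𝓝 0) := by
  have hcont : Continuous fun ε : ℝ => (WithLp.toLp 2 ![0, ε, 0] : EuclideanSpace ℝ (Fin 3)) :=
    (PiLp.continuous_toLp 2 _).comp (continuous_pi fun i => by fin_cases i <;> fun_prop)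
  have hzero : (WithLp.toLp 2 ![0, 0, 0] : EuclideanSpace ℝ (Fin 3)) = 0 := by
    ext i
    fin_cases i <;> rfl
  simpa only [hzero] using hcont.tendsto 0

theorem stmt16 (ε ρ : ℝ) (hε : ε ≠ 0) (hρ : ρ < Real.pi / 2) :
    (WithLp.toLp 2 ![0, ε, 0] : EuclideanSpace ℝ (Fin 3)) ∉
      fUni '' (Metric.ball (0 : EuclideanSpace ℝ (Fin 3)) ρ ×ˢ (Set.univ : Set (ℝ × ℝ))) ∧
    fUni '' (Metric.ball (0 : EuclideanSpace ℝ (Fin 3)) ρ ×ˢ (Set.univ : Set (ℝ × ℝ))) ∉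
      nhds (0 : EuclideanSpace ℝ (Fin 3)) := by
  refine ⟨toLp_sideways_notMem_image_fUni hε hρ.le, fun hnhds => ?_⟩
  obtain ⟨δ, hδ, hmem⟩ := ((eventually_mem_nhdsWithin (s := {(0 : ℝ)}ᶜ)).and
    ((tendsto_toLp_sideways.mono_left nhdsWithin_le_nhds).eventually hnhds)).exists
  exact toLp_sideways_notMem_image_fUni hδ hρ.le hmem
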